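/- arXiv:2401.11690 — 2 statements merged into one kernel-verified Lean document; each statement's English description precedes it below -/
import Mathlib

section
/- Let n ≥ 3 and let Ω ⊆ ℝⁿ be a bounded convex domain whose boundary is of class C³. Let u ∈ C⁰(ℝⁿ \ Ω) be locally convex in ℝⁿ \ Ω̄, and define φ(x) := u(x) for x ∈ ∂Ω. Then φ is semi-convex with respect to ∂Ω. -/
open Metric Filter MeasureTheory Bornology
open scoped RealInnerProductSpace Topology Classical

noncomputable section

/-- `ℝⁿ` -/
abbrev Euc (n : ℕ) : Type := EuclideanSpace ℝ (Fin n)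

/-- `ℝ^{n-1}` -/
abbrev Euc' (n : ℕ) : Type := EuclideanSpace ℝ (Fin (n - 1))

/-- The determinant of the Hessian matrix `D²v(x)`. -/
def hessDet (n : ℕ) (v : Euc n → ℝ) (x : Euc n) : ℝ :=
  (Matrix.of fun i j : Fin n =>
    fderiv ℝ (fun y => fderiv ℝ v y (EuclideanSpace.single i 1)) x
      (EuclideanSpace.single j 1)).det

/-- `u` is locally convex in `D`: every point of `D` has an open ball contained in `D`
on which `u` is convex. -/
def LocallyConvexOn' (n : ℕ) (D : Set (Euc n)) (u : Euc n → ℝ) : Prop :=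
  ∀ x ∈ D, ∃ r > 0, ball x r ⊆ D ∧ ConvexOn ℝ (ball x r) u

/-- `u` is a (continuous, locally convex) viscosity subsolution of `det D²u = 1` in `D`. -/
def ViscSubsol (n : ℕ) (D : Set (Euc n)) (u : Euc n → ℝ) : Prop :=
  ContinuousOn u D ∧ LocallyConvexOn' n D u ∧
    ∀ v : Euc n → ℝ, ContDiffOn ℝ 2 v D → ∀ x₀ ∈ D,
      IsLocalMax (fun x => u x - v x) x₀ → 1 ≤ hessDet n v x₀

/-- `u` is a (continuous, locally convex) viscosity supersolution of `det D²u = 1` in `D`. -/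
def ViscSupersol (n : ℕ) (D : Set (Euc n)) (u : Euc n → ℝ) : Prop :=
  ContinuousOn u D ∧ LocallyConvexOn' n D u ∧
    ∀ v : Euc n → ℝ, ContDiffOn ℝ 2 v D → LocallyConvexOn' n D v → ∀ x₀ ∈ D,
      IsLocalMin (fun x => u x - v x) x₀ → hessDet n v x₀ ≤ 1

/-- `u` is a viscosity solution of `det D²u = 1` in `D`. -/
def ViscSol (n : ℕ) (D : Set (Euc n)) (u : Euc n → ℝ) : Prop :=
  ViscSubsol n D u ∧ ViscSupersol n D u

/-- A local coordinate system at the boundary point `ξ` of `Ω`: `f` is a linear isometric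
embedding of `ℝ^{n-1}` (the `x'` variables) into `ℝⁿ`, orthogonal to the unit vector `ν`
(the positive `xₙ`-direction, pointing into `Ω`), the origin of coordinates is `ξ`,
and near `ξ` the boundary `∂Ω` is the graph `xₙ = ρ(x')` for `|x'| < δ`, with `Ω` lying
above the graph. -/
def IsLocalCoord (n : ℕ) (Ω : Set (Euc n)) (ξ : Euc n)
    (f : Euc' n →ₗᵢ[ℝ] Euc n) (ν : Euc n) (δ : ℝ) (ρ : Euc' n → ℝ) : Prop :=
  0 < δ ∧ ‖ν‖ = 1 ∧ (∀ x' : Euc' n, ⟪f x', ν⟫ = 0) ∧ ρ 0 = 0 ∧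
    (∀ x' : Euc' n, ‖x'‖ < δ → ξ + f x' + ρ x' • ν ∈ frontier Ω) ∧
    ∃ U ∈ 𝓝 ξ, ∀ x' : Euc' n, ‖x'‖ < δ → ∀ t : ℝ, ξ + f x' + t • ν ∈ U →
      ((ξ + f x' + t • ν ∈ Ω ↔ ρ x' < t) ∧ (ξ + f x' + t • ν ∈ frontier Ω ↔ t = ρ x'))

/-- `∂Ω` is of class `C^k`: near every boundary point, `∂Ω` is the graph of a `C^k`
function `ρ` in a local coordinate system (with `D'ρ(0') = 0`). -/
def CkBoundary (n : ℕ) (k : ℕ∞) (Ω : Set (Euc n)) : Prop :=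
  ∀ ξ ∈ frontier Ω, ∃ f ν δ ρ, IsLocalCoord n Ω ξ f ν δ ρ ∧
    ContDiffOn ℝ k ρ (ball 0 δ) ∧ fderivWithin ℝ ρ (ball 0 δ) 0 = 0

/-- `φ` is semi-convex with respect to `∂Ω` at `ξ`: in a local coordinate system at `ξ`,
`ψ(x') := φ(x', ρ(x'))` satisfies `ψ(x') + (K/2)|x'|²` convex on `B'_δ(0')` for some `K > 0`. -/
def SemiconvexAt (n : ℕ) (Ω : Set (Euc n)) (φ : Euc n → ℝ) (ξ : Euc n) : Prop :=
  ∃ f ν δ ρ, IsLocalCoord n Ω ξ f ν δ ρ ∧ ∃ K > 0,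
    ConvexOn ℝ (ball (0 : Euc' n) δ)
      (fun x' => φ (ξ + f x' + ρ x' • ν) + K / 2 * ‖x'‖ ^ 2)

/-- `φ` is semi-convex with respect to `∂Ω`. -/
def SemiconvexBdry (n : ℕ) (Ω : Set (Euc n)) (φ : Euc n → ℝ) : Prop :=
  ∀ ξ ∈ frontier Ω, SemiconvexAt n Ω φ ξ

/-- `Ω` satisfies an enclosing sphere condition at `ξ ∈ ∂Ω` with radius `r`:
there is a ball `B_r(y) ⊇ Ω` with `ξ ∈ ∂B_r(y)`. -/
def EnclosingSphereAt (n : ℕ) (Ω : Set (Euc n)) (ξ : Euc n) (r : ℝ) : Prop :=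
  0 < r ∧ ∃ y : Euc n, Ω ⊆ ball y r ∧ dist ξ y = r

/-- `Ω` satisfies a uniform enclosing sphere condition. -/
def UnifEnclosingSphere (n : ℕ) (Ω : Set (Euc n)) : Prop :=
  ∃ R : ℝ, ∀ ξ ∈ frontier Ω, ∃ r ≤ R, EnclosingSphereAt n Ω ξ r

/-- `u ∈ C⁰(ℝⁿ \ Ω)` is a viscosity solution of the exterior Dirichlet problem
`det D²u = 1` in `ℝⁿ \ Ω̄`, `u = φ` on `∂Ω`, `u(x) - g(x) → 0` as `|x| → ∞`. -/
def SolvesMA (n : ℕ) (Ω : Set (Euc n)) (φ g u : Euc n → ℝ) : Prop :=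
  ContinuousOn u Ωᶜ ∧ ViscSol n (closure Ω)ᶜ u ∧ (∀ x ∈ frontier Ω, u x = φ x) ∧
    Tendsto (fun x => u x - g x) (cocompact (Euc n)) (𝓝 0)

/-- The prescribed quadratic asymptotic profile `(1/2) x A xᵀ + b ⬝ x + c`. -/
def quadAsym (n : ℕ) (A : Matrix (Fin n) (Fin n) ℝ) (b : Euc n) (c : ℝ) (x : Euc n) : ℝ :=
  (1 / 2) * ∑ i, ∑ j, x i * A i j * x j + ⟪b, x⟫ + c

/-- The family `S_c^φ` of subfunctions: continuous on `ℝⁿ \ Ω`, viscosity subsolutions in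
`ℝⁿ \ Ω̄`, `≤ φ` on `∂Ω`, with `limsup_{|x|→∞} (v(x) - |x|²/2) ≤ c`. -/
def Sset (n : ℕ) (Ω : Set (Euc n)) (φ : Euc n → ℝ) (c : ℝ) : Set (Euc n → ℝ) :=
  {v | ContinuousOn v Ωᶜ ∧ ViscSubsol n (closure Ω)ᶜ v ∧ (∀ x ∈ frontier Ω, v x ≤ φ x) ∧
    ∀ ε > 0, ∀ᶠ x in cocompact (Euc n), v x - ‖x‖ ^ 2 / 2 ≤ c + ε}

/-- The Perron solution `u(x) = sup { v(x) : v ∈ S_c^φ }`. -/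
def perron (n : ℕ) (Ω : Set (Euc n)) (φ : Euc n → ℝ) (c : ℝ) (x : Euc n) : ℝ :=
  sSup ((fun v => v x) '' Sset n Ω φ c)

/-!
Near `ξ ∈ ∂Ω` write `∂Ω` as the graph `t = ρ(x')` of a `C²` function, with `Ω` above it; convexity
of `Ω` makes `ρ` convex. Push the graph down by `τ > 0` into the exterior, where `u` is convex along
segments. For nearby `x', y'` the chord joining the two pushed points stays in the exterior, since
the chord of `ρ` lies at most `C |x' - y'|²` above `ρ`; so `u` at its midpoint is at most the
average of the end values. That midpoint lies at most `C |x' - y'|²` above the pushed graph, and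
convexity of `u` on the vertical segment below it, together with a bound for `|u|` near `ξ`, turns
this vertical gap into an error `O(|x' - y'|²)` with a constant independent of `τ`. Hence the pushed
restriction of `u` plus `(K/2)|x'|²` is convex for a fixed `K`, and `τ → 0` gives the claim by
continuity of `u` up to `∂Ω`.
-/

open Set

lemma eventually_sub_add_mem_Ioo {a b m : ℝ} (hm : m ∈ Ioo a b) :
    ∀ᶠ η in 𝓝 (0 : ℝ), m - η ∈ Ioo a b ∧ m + η ∈ Ioo a b :=
  ((continuous_sub_left m).tendsto' 0 m (sub_zero m) |>.eventually (Ioo_mem_nhds hm.1 hm.2)).and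
    ((continuous_const_add m).tendsto' 0 m (add_zero m) |>.eventually (Ioo_mem_nhds hm.1 hm.2))

/-- Maximum principle: the largest maximiser of `φ` cannot be an interior point. -/
theorem nonpos_of_eventually_midpoint_le {φ : ℝ → ℝ} {a b : ℝ} (hφ : ContinuousOn φ (Icc a b))
    (ha : φ a ≤ 0) (hb : φ b ≤ 0)
    (hmid : ∀ m ∈ Ioo a b, ∀ᶠ η in 𝓝[>] 0, φ m ≤ (φ (m - η) + φ (m + η)) / 2) :
    ∀ x ∈ Icc a b, φ x ≤ 0 := by
  intro x hx
  by_contra! hpos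
  obtain ⟨x₀, hx₀, hmax⟩ := isCompact_Icc.exists_isMaxOn ⟨x, hx⟩ hφ
  have hT : IsCompact (Icc a b ∩ φ ⁻¹' {φ x₀}) := isCompact_Icc.of_isClosed_subset
    (hφ.preimage_isClosed_of_isClosed isClosed_Icc isClosed_singleton) inter_subset_left
  obtain ⟨m, ⟨hmab, hm : φ m = φ x₀⟩, hgreatest⟩ := hT.exists_isGreatest ⟨x₀, hx₀, rfl⟩
  have hmpos : 0 < φ m := hm ▸ hpos.trans_le (hmax hx)
  have hmo : m ∈ Ioo a b :=
    ⟨hmab.1.lt_of_ne (by rintro rfl; linarith), hmab.2.lt_of_ne (by rintro rfl; linarith)⟩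
  obtain ⟨η, ⟨hle, hsub, hadd⟩, hη : 0 < η⟩ := (((hmid m hmo).and
    (eventually_nhdsWithin_of_eventually_nhds (eventually_sub_add_mem_Ioo hmo))).and
    self_mem_nhdsWithin).exists
  have hleft : φ (m - η) ≤ φ m := hm ▸ hmax (Ioo_subset_Icc_self hsub)
  have hright : φ (m + η) < φ m := by
    refine lt_of_le_of_ne (hm ▸ hmax (Ioo_subset_Icc_self hadd)) fun heq => ?_
    have := hgreatest ⟨Ioo_subset_Icc_self hadd, heq.trans hm⟩
    linarith
  linarith

section NormedSpace

variable {E : Type*} [NormedAddCommGroup E] [NormedSpace ℝ E]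

theorem convexOn_of_eventually_midpoint_le {s : Set E} {h : E → ℝ} (hs : Convex ℝ s)
    (hc : ContinuousOn h s)
    (hmid : ∀ m ∈ s, ∀ᶠ v in 𝓝 (0 : E), m - v ∈ s → m + v ∈ s →
      h m ≤ (h (m - v) + h (m + v)) / 2) :
    ConvexOn ℝ s h := by
  refine ⟨hs, fun x hx y hy a b ha hb hab => ?_⟩
  have hseg : ∀ t ∈ Icc (0 : ℝ) 1, x + t • (y - x) ∈ s := fun t ht => hs.add_smul_sub_mem hx hy ht
  set k : ℝ → ℝ := fun t => h (x + t • (y - x)) - ((1 - t) * h x + t * h y)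
  have hk : ∀ t ∈ Icc (0 : ℝ) 1, k t ≤ 0 := by
    refine nonpos_of_eventually_midpoint_le ?_ (by simp [k]) (by simp [k]) fun m hm => ?_
    · exact (hc.comp (by fun_prop) hseg).sub (by fun_prop)
    have hv : Tendsto (fun η : ℝ => η • (y - x)) (𝓝[>] 0) (𝓝 0) :=
      ((continuous_id.smul continuous_const).tendsto' (0 : ℝ) 0 (zero_smul ℝ _)).mono_left
        nhdsWithin_le_nhds
    filter_upwards [hv.eventually (hmid _ (hseg m (Ioo_subset_Icc_self hm))),
      eventually_nhdsWithin_of_eventually_nhds (eventually_sub_add_mem_Ioo hm)]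
      with η hη ⟨hsub, hadd⟩
    have hsub' : x + m • (y - x) - η • (y - x) = x + (m - η) • (y - x) := by module
    have hadd' : x + m • (y - x) + η • (y - x) = x + (m + η) • (y - x) := by module
    rw [hsub', hadd'] at hη
    have := hη (hseg _ (Ioo_subset_Icc_self hsub)) (hseg _ (Ioo_subset_Icc_self hadd))
    simp only [k]
    linarith
  have hxy : x + b • (y - x) = a • x + b • y := by
    rw [eq_sub_of_add_eq hab]; module
  have := hk b ⟨hb, by linarith⟩
  simp only [k, hxy, smul_eq_mul, eq_sub_of_add_eq hab] at this ⊢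
  linarith

theorem ConvexOn.of_tendsto {ι : Type*} {l : Filter ι} [l.NeBot] {s : Set E} {F : ι → E → ℝ}
    {f : E → ℝ} (hF : ∀ᶠ i in l, ConvexOn ℝ s (F i))
    (hlim : ∀ x ∈ s, Tendsto (fun i => F i x) l (𝓝 (f x))) : ConvexOn ℝ s f := by
  refine ⟨hF.exists.choose_spec.1, fun x hx y hy a b ha hb hab => ?_⟩
  have hz : a • x + b • y ∈ s := hF.exists.choose_spec.1 hx hy ha hb hab
  exact le_of_tendsto_of_tendsto (hlim _ hz) (((hlim x hx).const_smul a).add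
    ((hlim y hy).const_smul b)) (hF.mono fun i hi => hi.2 hx hy ha hb hab)

theorem ConvexOn.of_locallyConvex {D s : Set E} {u : E → ℝ}
    (hlc : ∀ x ∈ D, ∃ r > 0, ConvexOn ℝ (ball x r) u) (hu : ContinuousOn u D)
    (hs : Convex ℝ s) (hsD : s ⊆ D) : ConvexOn ℝ s u := by
  refine convexOn_of_eventually_midpoint_le hs (hu.mono hsD) fun m hm => ?_
  obtain ⟨r, hr, hconv⟩ := hlc m (hsD hm)
  filter_upwards [ball_mem_nhds 0 hr] with v hv _ _
  have hv' : ‖v‖ < r := mem_ball_zero_iff.1 hv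
  have := hconv.2 (x := m - v) (y := m + v) (by simpa [dist_eq_norm] using hv')
    (by simpa [dist_eq_norm] using hv') (by norm_num : (0 : ℝ) ≤ 1 / 2)
    (by norm_num : (0 : ℝ) ≤ 1 / 2) (by norm_num)
  have hmid : (1 / 2 : ℝ) • (m - v) + (1 / 2 : ℝ) • (m + v) = m := by module
  rw [hmid, smul_eq_mul, smul_eq_mul] at this
  linarith

theorem ConvexOn.comp_affineMap_of_subset {G : Type*} [AddCommGroup G] [Module ℝ G]
    {D : Set E} {u : E → ℝ} (hu : ∀ T ⊆ D, Convex ℝ T → ConvexOn ℝ T u) (A : G →ᵃ[ℝ] E)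
    {S : Set G} (hS : Convex ℝ S) (hSD : S ⊆ A ⁻¹' D) : ConvexOn ℝ S (u ∘ A) :=
  ((hu _ (image_subset_iff.2 hSD) (hS.affine_image A)).comp_affineMap A).subset
    (subset_preimage_image A S) hS

def ChordGapLE (V : Set E) (ρ : E → ℝ) (C : ℝ) : Prop :=
  ∀ x ∈ V, ∀ y ∈ V, ∀ a b : ℝ, 0 ≤ a → 0 ≤ b → a + b = 1 →
    a * ρ x + b * ρ y - ρ (a • x + b • y) ≤ C * ‖x - y‖ ^ 2

theorem chordGapLE_of_lipschitzOnWith_fderiv {f : E → ℝ} {f' : E → E →L[ℝ] ℝ} {s : Set E}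
    {L : NNReal} (hs : Convex ℝ s) (hf : ∀ x ∈ s, HasFDerivAt f (f' x) x)
    (hL : LipschitzOnWith L f' s) : ChordGapLE s f L := by
  intro x hx y hy a b ha hb hab
  set z := a • x + b • y
  have hz : z ∈ s := hs hx hy ha hb hab
  have taylor : ∀ w ∈ s, f w - f z - f' z (w - z) ≤ L * ‖w - z‖ ^ 2 := by
    intro w hw
    have hseg : segment ℝ z w ⊆ s := hs.segment_subset hz hw
    have := (convex_segment z w).norm_image_sub_le_of_norm_hasFDerivWithin_le'
      (fun p hp => (hf p (hseg hp)).hasFDerivWithinAt) (φ := f' z) (C := L * ‖w - z‖)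
      (fun p hp => ?_) (left_mem_segment ℝ z w) (right_mem_segment ℝ z w)
    · have := le_abs_self (f w - f z - f' z (w - z))
      rw [← Real.norm_eq_abs] at this
      nlinarith
    · calc ‖f' p - f' z‖ ≤ L * ‖p - z‖ := hL.norm_sub_le (hseg hp) hz
        _ ≤ L * ‖w - z‖ := by
          gcongr
          exact norm_sub_le_of_mem_segment hp
  have hxz : x - z = b • (x - y) := by
    simp only [z]; rw [eq_sub_of_add_eq hab]; module
  have hyz : y - z = (-a) • (x - y) := by
    simp only [z]; rw [eq_sub_of_add_eq hab]; module
  have h1 := taylor x hx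
  have h2 := taylor y hy
  rw [hxz, norm_smul, map_smul, Real.norm_eq_abs, abs_of_nonneg hb] at h1
  rw [hyz, norm_smul, map_smul, Real.norm_eq_abs, abs_neg, abs_of_nonneg ha] at h2
  simp only [smul_eq_mul, neg_mul, sub_neg_eq_add] at h1 h2
  have hab' : a * b ≤ 1 := by nlinarith
  calc a * f x + b * f y - f z
      = a * (f x - f z - b * f' z (x - y)) + b * (f y - f z + a * f' z (x - y)) := by
        linear_combination (f z) * hab
    _ ≤ a * (L * (b * ‖x - y‖) ^ 2) + b * (L * (a * ‖x - y‖) ^ 2) := by gcongr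
    _ = a * b * (L * ‖x - y‖ ^ 2) := by linear_combination (a * b * L * ‖x - y‖ ^ 2) * hab
    _ ≤ L * ‖x - y‖ ^ 2 := mul_le_of_le_one_left (by positivity) hab'

def lowerCollar (V : Set E) (ρ : E → ℝ) (d : ℝ) : Set (E × ℝ) :=
  {p | p.1 ∈ V ∧ ρ p.1 - d ≤ p.2 ∧ p.2 < ρ p.1}

section LowerCollar

variable {V : Set E} {ρ : E → ℝ} {C d B τ : ℝ} {w : E × ℝ → ℝ}

theorem lowerCollar_vertical_le (hw : ∀ S ⊆ lowerCollar V ρ d, Convex ℝ S → ConvexOn ℝ S w)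
    (hB : ∀ p ∈ lowerCollar V ρ d, |w p| ≤ B) (hτ : 0 < τ) (hτd : 2 * τ ≤ d) {x : E}
    (hx : x ∈ V) {s : ℝ} (hs : ρ x ≤ s) (hsτ : s - τ < ρ x) :
    w (x, ρ x - τ) ≤ w (x, s - τ) + 4 * B * (s - ρ x) / d := by
  set P : E × ℝ := (x, s - τ)
  set Q : E × ℝ := (x, ρ x - d)
  have hseg : segment ℝ P Q ⊆ lowerCollar V ρ d := by
    rintro _ ⟨a, b, ha, hb, hab, rfl⟩
    have := convex_Ico (ρ x - d) (ρ x) (x := s - τ) ⟨by linarith, hsτ⟩ ⟨le_rfl, by linarith⟩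
      ha hb hab
    exact ⟨by simpa [P, Q, Convex.combo_self hab] using hx, by simpa [P, Q, Convex.combo_self hab]
      using this.1, by simpa [P, Q, Convex.combo_self hab] using this.2⟩
  have hB0 : 0 ≤ B := (abs_nonneg _).trans (hB P (hseg (left_mem_segment ℝ P Q)))
  -- `(x, ρ x - τ)` divides the vertical segment from `P` down to `Q` in the ratio `θ : 1 - θ`
  set θ := (s - ρ x) / (s - ρ x - τ + d)
  have hden : d / 2 ≤ s - ρ x - τ + d := by linarith
  have hθ0 : 0 ≤ θ := div_nonneg (by linarith) (by linarith)
  have hθ1 : θ ≤ 1 := (div_le_one (by linarith)).2 (by linarith)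
  have hθ : θ ≤ 2 * (s - ρ x) / d := by
    rw [div_le_div_iff₀ (by linarith) (by linarith)]
    nlinarith
  have hpt : (1 - θ) • P + θ • Q = (x, ρ x - τ) := by
    refine Prod.ext (Convex.combo_self (by ring) x) ?_
    have hθD : θ * (s - ρ x - τ + d) = s - ρ x := div_mul_cancel₀ _ (by linarith)
    simp only [P, Q, Prod.snd_add, Prod.smul_snd, smul_eq_mul]
    linear_combination -hθD
  have hconv := (hw _ hseg (convex_segment P Q)).2 (left_mem_segment ℝ P Q)
    (right_mem_segment ℝ P Q) (sub_nonneg.2 hθ1) hθ0 (sub_add_cancel 1 θ)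
  rw [hpt, smul_eq_mul, smul_eq_mul] at hconv
  have hP := abs_le.1 (hB P (hseg (left_mem_segment ℝ P Q)))
  have hQ := abs_le.1 (hB Q (hseg (right_mem_segment ℝ P Q)))
  calc w (x, ρ x - τ) ≤ w P + θ * (w Q - w P) := by linarith
    _ ≤ w P + θ * (2 * B) := by gcongr; linarith
    _ ≤ w P + 2 * (s - ρ x) / d * (2 * B) := by gcongr
    _ = w (x, s - τ) + 4 * B * (s - ρ x) / d := by ring

theorem lowerCollar_chord_le (hρ : ConvexOn ℝ V ρ)
    (hgap : ChordGapLE V ρ C)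
    (hw : ∀ S ⊆ lowerCollar V ρ d, Convex ℝ S → ConvexOn ℝ S w) (hτd : τ ≤ d) {x y : E}
    (hx : x ∈ V) (hy : y ∈ V) (hxy : C * ‖x - y‖ ^ 2 < τ) :
    w ((1 / 2 : ℝ) • x + (1 / 2 : ℝ) • y, (ρ x + ρ y) / 2 - τ) ≤
      (w (x, ρ x - τ) + w (y, ρ y - τ)) / 2 := by
  set P : E × ℝ := (x, ρ x - τ)
  set Q : E × ℝ := (y, ρ y - τ)
  have hseg : segment ℝ P Q ⊆ lowerCollar V ρ d := by
    rintro _ ⟨a, b, ha, hb, hab, rfl⟩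
    have hconv := hρ.2 hx hy ha hb hab
    have hgap' := hgap x hx y hy a b ha hb hab
    simp only [smul_eq_mul] at hconv
    simp only [lowerCollar, P, Q, mem_ofPred_eq, Prod.fst_add, Prod.snd_add, Prod.smul_fst,
      Prod.smul_snd, smul_eq_mul]
    refine ⟨hρ.1 hx hy ha hb hab, ?_, ?_⟩ <;> nlinarith
  have hmid : (1 / 2 : ℝ) • P + (1 / 2 : ℝ) • Q =
      ((1 / 2 : ℝ) • x + (1 / 2 : ℝ) • y, (ρ x + ρ y) / 2 - τ) := by
    ext
    · simp [P, Q]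
    · simp [P, Q]; ring
  have := (hw _ hseg (convex_segment P Q)).2 (left_mem_segment ℝ P Q) (right_mem_segment ℝ P Q)
    (by norm_num : (0 : ℝ) ≤ 1 / 2) (by norm_num : (0 : ℝ) ≤ 1 / 2) (by norm_num)
  rw [hmid, smul_eq_mul, smul_eq_mul] at this
  linarith

theorem lowerCollar_midpoint_le (hρ : ConvexOn ℝ V ρ)
    (hgap : ChordGapLE V ρ C)
    (hw : ∀ S ⊆ lowerCollar V ρ d, Convex ℝ S → ConvexOn ℝ S w)
    (hB : ∀ p ∈ lowerCollar V ρ d, |w p| ≤ B) (hτ : 0 < τ) (hτd : 2 * τ ≤ d) {x y : E}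
    (hx : x ∈ V) (hy : y ∈ V) (hxy : C * ‖x - y‖ ^ 2 < τ) :
    w ((1 / 2 : ℝ) • x + (1 / 2 : ℝ) • y, ρ ((1 / 2 : ℝ) • x + (1 / 2 : ℝ) • y) - τ) ≤
      (w (x, ρ x - τ) + w (y, ρ y - τ)) / 2 + 4 * B * C / d * ‖x - y‖ ^ 2 := by
  set m := (1 / 2 : ℝ) • x + (1 / 2 : ℝ) • y
  have hm : m ∈ V := hρ.1 hx hy (by norm_num) (by norm_num) (by norm_num)
  have hconv : ρ m ≤ (ρ x + ρ y) / 2 := by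
    have := hρ.2 hx hy (by norm_num : (0 : ℝ) ≤ 1 / 2) (by norm_num : (0 : ℝ) ≤ 1 / 2)
      (by norm_num)
    simp only [smul_eq_mul] at this
    linarith
  have hgapm := hgap x hx y hy (1 / 2) (1 / 2) (by norm_num) (by norm_num) (by norm_num)
  have hB0 : 0 ≤ B := (abs_nonneg _).trans (hB (x, ρ x - τ) ⟨hx, by simp; linarith, by simpa⟩)
  have hvert := lowerCollar_vertical_le hw hB hτ hτd hm hconv (by linarith)
  have hchord := lowerCollar_chord_le hρ hgap hw (by linarith) hx hy hxy
  have hd : 0 < d := by linarith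
  calc w (m, ρ m - τ) ≤ w (m, (ρ x + ρ y) / 2 - τ) + 4 * B * ((ρ x + ρ y) / 2 - ρ m) / d := hvert
    _ ≤ (w (x, ρ x - τ) + w (y, ρ y - τ)) / 2 + 4 * B * (C * ‖x - y‖ ^ 2) / d := by
      gcongr
      linarith
    _ = _ := by ring

end LowerCollar

end NormedSpace

section InnerProductSpace

variable {F : Type*} [NormedAddCommGroup F] [InnerProductSpace ℝ F]
  {V : Set F} {ρ : F → ℝ} {C d B : ℝ} {w : F × ℝ → ℝ}

theorem convexOn_lowerCollar_shift_add_sq (hρ : ConvexOn ℝ V ρ) (hρc : ContinuousOn ρ V)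
    (hgap : ChordGapLE V ρ C)
    (hw : ∀ S ⊆ lowerCollar V ρ d, Convex ℝ S → ConvexOn ℝ S w)
    (hwc : ContinuousOn w (lowerCollar V ρ d))
    (hB : ∀ p ∈ lowerCollar V ρ d, |w p| ≤ B) {τ : ℝ} (hτ : 0 < τ) (hτd : 2 * τ ≤ d) :
    ConvexOn ℝ V (fun x => w (x, ρ x - τ) + 32 * B * C / d / 2 * ‖x‖ ^ 2) := by
  have hmem : ∀ x ∈ V, (x, ρ x - τ) ∈ lowerCollar V ρ d :=
    fun x hx => ⟨hx, by simp; linarith, by simpa⟩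
  refine convexOn_of_eventually_midpoint_le hρ.1
    ((hwc.comp (continuousOn_id.prodMk (hρc.sub continuousOn_const)) hmem).add
      (by fun_prop)) fun m hm => ?_
  have hsmall : Tendsto (fun v : F => C * ‖(m - v) - (m + v)‖ ^ 2) (𝓝 0) (𝓝 0) :=
    Continuous.tendsto' (by fun_prop) _ _ (by simp)
  filter_upwards [hsmall.eventually (gt_mem_nhds hτ)] with v hv hsub hadd
  have hmid := lowerCollar_midpoint_le hρ hgap hw hB hτ hτd hsub hadd hv
  have hm' : (1 / 2 : ℝ) • (m - v) + (1 / 2 : ℝ) • (m + v) = m := by module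
  have hdiff : (m - v) - (m + v) = -(2 : ℝ) • v := by module
  rw [hm', hdiff, norm_smul] at hmid
  have hpar : ‖m - v‖ ^ 2 + ‖m + v‖ ^ 2 = 2 * ‖m‖ ^ 2 + 2 * ‖v‖ ^ 2 := by
    rw [norm_sub_sq_real, norm_add_sq_real]; ring
  simp only [norm_neg, Real.norm_ofNat] at hmid
  linear_combination hmid - (8 * B * C / d) * hpar

theorem convexOn_lowerCollar_graph_add_sq (hρ : ConvexOn ℝ V ρ) (hρc : ContinuousOn ρ V)
    (hgap : ChordGapLE V ρ C)
    (hw : ∀ S ⊆ lowerCollar V ρ d, Convex ℝ S → ConvexOn ℝ S w)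
    (hwc : ContinuousOn w (lowerCollar V ρ d))
    (hB : ∀ p ∈ lowerCollar V ρ d, |w p| ≤ B) (hd : 0 < d)
    (hlim : ∀ x ∈ V, Tendsto (fun τ => w (x, ρ x - τ)) (𝓝[>] 0) (𝓝 (w (x, ρ x)))) :
    ConvexOn ℝ V (fun x => w (x, ρ x) + 32 * B * C / d / 2 * ‖x‖ ^ 2) := by
  refine ConvexOn.of_tendsto (l := 𝓝[>] 0) ?_ fun x hx => (hlim x hx).add tendsto_const_nhds
  filter_upwards [Ioo_mem_nhdsGT (half_pos hd)] with τ hτ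
  exact convexOn_lowerCollar_shift_add_sq hρ hρc hgap hw hwc hB hτ.1 (by linarith [hτ.2])

end InnerProductSpace

def graphChart {E' E : Type*} [AddCommGroup E'] [Module ℝ E'] [AddCommGroup E] [Module ℝ E]
    (ξ ν : E) (f : E' →ₗ[ℝ] E) : E' × ℝ →ᵃ[ℝ] E where
  toFun p := ξ + f p.1 + p.2 • ν
  linear := f.coprod (LinearMap.toSpanSingleton ℝ E ν)
  map_vadd' p v := by
    simp only [vadd_eq_add, Prod.fst_add, Prod.snd_add, map_add, add_smul, LinearMap.coprod_apply,
      LinearMap.toSpanSingleton_apply]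
    abel

/-- `W` plays the role of the epigraph of `ρ` near its graph. -/
theorem convexOn_of_mem_iff_lt {E : Type*} [AddCommGroup E] [Module ℝ E] {V : Set E}
    {W : Set (E × ℝ)} {ρ : E → ℝ} {ε : ℝ} (hV : Convex ℝ V) (hW : Convex ℝ W)
    (hρ : ∀ x ∈ V, |ρ x| < ε) (hmem : ∀ x ∈ V, ∀ t, |t| < 2 * ε → ((x, t) ∈ W ↔ ρ x < t)) :
    ConvexOn ℝ V ρ := by
  refine ⟨hV, fun x hx y hy a b ha hb hab => ?_⟩
  set c := a • ρ x + b • ρ y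
  have hc : c ∈ Ioo (-ε) ε :=
    convex_Ioo (-ε) ε (abs_lt.1 (hρ x hx)) (abs_lt.1 (hρ y hy)) ha hb hab
  have hz := hV hx hy ha hb hab
  have hle : ∀ᶠ e in 𝓝[>] (0 : ℝ), ρ (a • x + b • y) ≤ c + e := by
    filter_upwards [Ioo_mem_nhdsGT ((abs_nonneg _).trans_lt (hρ x hx))] with e ⟨he0, heε⟩
    have hup : ∀ p ∈ V, (p, ρ p + e) ∈ W := fun p hp =>
      (hmem p hp _ (by linarith [abs_add_le (ρ p) e, abs_of_pos he0, hρ p hp])).2 (by linarith)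
    have hcomb : a • (x, ρ x + e) + b • (y, ρ y + e) = (a • x + b • y, c + e) := by
      ext
      · simp
      · simp only [Prod.snd_add, Prod.smul_snd, smul_eq_mul, c]
        linear_combination e * hab
    have := hW (hup x hx) (hup y hy) ha hb hab
    rw [hcomb] at this
    exact ((hmem _ hz _ (by rw [abs_lt]; constructor <;> linarith [hc.1, hc.2])).1 this).le
  exact ge_of_tendsto (((continuous_const_add c).tendsto' 0 c (add_zero c)).mono_left
    nhdsWithin_le_nhds) hle

section LocalCoordinates

variable {n : ℕ} {Ω : Set (Euc n)} {ξ ν : Euc n} {f : Euc' n →ₗᵢ[ℝ] Euc n} {δ : ℝ}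
  {ρ : Euc' n → ℝ}

theorem IsLocalCoord.mono (h : IsLocalCoord n Ω ξ f ν δ ρ) {r : ℝ} (hr : 0 < r)
    (hrδ : ball (0 : Euc' n) r ⊆ ball 0 δ) : IsLocalCoord n Ω ξ f ν r ρ := by
  obtain ⟨-, hν, horth, hρ0, hfr, U, hU, hchar⟩ := h
  have hlt : ∀ x : Euc' n, ‖x‖ < r → ‖x‖ < δ := fun x hx => by
    simpa using hrδ (mem_ball_zero_iff.2 hx)
  exact ⟨hr, hν, horth, hρ0, fun x hx => hfr x (hlt x hx), U, hU, fun x hx => hchar x (hlt x hx)⟩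

theorem IsLocalCoord.dist_le (h : IsLocalCoord n Ω ξ f ν δ ρ) (x : Euc' n) (t : ℝ) :
    dist (ξ + f x + t • ν) ξ ≤ ‖x‖ + |t| := by
  rw [dist_eq_norm, add_sub_right_comm, add_sub_cancel_left]
  calc ‖f x + t • ν‖ ≤ ‖f x‖ + ‖t • ν‖ := norm_add_le _ _
    _ = ‖x‖ + |t| := by rw [f.norm_map, norm_smul, h.2.1, mul_one, Real.norm_eq_abs]

theorem IsLocalCoord.eventually_mem_iff (h : IsLocalCoord n Ω ξ f ν δ ρ)
    (hρ : ContinuousAt ρ 0) :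
    ∃ ε > 0, ∀ᶠ x in 𝓝 (0 : Euc' n), ‖x‖ < δ ∧ |ρ x| < ε ∧ ∀ t : ℝ, |t| < 3 * ε →
      (ξ + f x + t • ν ∈ Ω ↔ ρ x < t) ∧ (ξ + f x + t • ν ∈ frontier Ω ↔ t = ρ x) := by
  have hdist := h.dist_le
  obtain ⟨hδ, -, -, hρ0, -, U, hU, hchar⟩ := h
  obtain ⟨R, hR, hRU⟩ := Metric.mem_nhds_iff.1 hU
  have hρ' : Tendsto ρ (𝓝 0) (𝓝 0) := hρ0 ▸ hρ
  refine ⟨R / 4, by positivity, ?_⟩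
  filter_upwards [ball_mem_nhds 0 hδ, ball_mem_nhds 0 (by positivity : 0 < R / 4),
    hρ'.eventually (ball_mem_nhds 0 (by positivity : 0 < R / 4))] with x hxδ hxR hρx
  rw [mem_ball_zero_iff] at hxδ hxR
  rw [Real.dist_0_eq_abs] at hρx
  refine ⟨hxδ, hρx, fun t ht => hchar x hxδ t (hRU ?_)⟩
  rw [mem_ball]
  linarith [hdist x t]

theorem IsLocalCoord.graphChart_mem_of_mem_lowerCollar (h : IsLocalCoord n Ω ξ f ν δ ρ)
    {V : Set (Euc' n)} {r ε : ℝ} (hVr : ∀ x ∈ V, ‖x‖ < r)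
    (hV : ∀ x ∈ V, |ρ x| < ε ∧ ∀ t : ℝ, |t| < 3 * ε →
      (ξ + f x + t • ν ∈ Ω ↔ ρ x < t) ∧ (ξ + f x + t • ν ∈ frontier Ω ↔ t = ρ x)) :
    ∀ p ∈ lowerCollar V ρ ε,
      graphChart ξ ν f.toLinearMap p ∈ (closure Ω)ᶜ ∩ closedBall ξ (r + 2 * ε) := by
  rintro ⟨x, t⟩ ⟨hx, hlow, hup⟩
  have hρx := abs_lt.1 (hV x hx).1
  have ht : |t| < 2 * ε := abs_lt.2 ⟨by linarith, by linarith⟩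
  obtain ⟨hΩ, hfr⟩ := (hV x hx).2 t (by linarith)
  refine ⟨fun hcl => ?_, mem_closedBall.2 ((h.dist_le x t).trans (by linarith [hVr x hx]))⟩
  rcases closure_eq_self_union_frontier Ω ▸ hcl with hmem | hmem
  · exact absurd (hΩ.1 hmem) (by linarith)
  · exact absurd (hfr.1 hmem) hup.ne

theorem IsLocalCoord.exists_convexOn_graph_add_sq_of_lowerCollar (hΩo : IsOpen Ω)
    (h : IsLocalCoord n Ω ξ f ν δ ρ) {u : Euc n → ℝ} (hu : ContinuousOn u Ωᶜ)
    (hlc : LocallyConvexOn' n (closure Ω)ᶜ u) {V : Set (Euc' n)} {ε C R : ℝ} (hε : 0 < ε)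
    (hC : 0 < C) (hVδ : V ⊆ ball 0 δ) (hρ : ConvexOn ℝ V ρ) (hρc : ContinuousOn ρ V)
    (hgap : ChordGapLE V ρ C)
    (hext : ∀ p ∈ lowerCollar V ρ ε,
      graphChart ξ ν f.toLinearMap p ∈ (closure Ω)ᶜ ∩ closedBall ξ R) :
    ∃ K > 0, ConvexOn ℝ V (fun x => u (ξ + f x + ρ x • ν) + K / 2 * ‖x‖ ^ 2) := by
  set A := graphChart ξ ν f.toLinearMap
  have hA : Continuous A := A.continuous_of_finiteDimensional
  have hcl : (closure Ω)ᶜ ⊆ Ωᶜ := compl_subset_compl.2 subset_closure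
  have hw : ∀ S ⊆ lowerCollar V ρ ε, Convex ℝ S → ConvexOn ℝ S (u ∘ A) := fun S hS hSc =>
    ConvexOn.comp_affineMap_of_subset (fun T hT hTc => ConvexOn.of_locallyConvex
      (fun x hx => (hlc x hx).imp fun _ h' => ⟨h'.1, h'.2.2⟩) (hu.mono hcl) hTc hT)
      A hSc fun p hp => (hext p (hS hp)).1
  obtain ⟨B, hB⟩ := ((isCompact_closedBall ξ R).inter_right
    hΩo.isClosed_compl).exists_bound_of_continuousOn (hu.mono inter_subset_right)
  have hBV : ∀ p ∈ lowerCollar V ρ ε, |(u ∘ A) p| ≤ max B 1 := fun p hp =>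
    (Real.norm_eq_abs _ ▸ hB _ ⟨(hext p hp).2, hcl (hext p hp).1⟩).trans (le_max_left B 1)
  have hlim : ∀ x ∈ V,
      Tendsto (fun τ => (u ∘ A) (x, ρ x - τ)) (𝓝[>] 0) (𝓝 ((u ∘ A) (x, ρ x))) := by
    intro x hx
    have hfr : A (x, ρ x) ∈ Ωᶜ := fun hmem =>
      hΩo.inter_frontier_eq.subset ⟨hmem, h.2.2.2.2.1 x (mem_ball_zero_iff.1 (hVδ hx))⟩
    have hcurve : Tendsto (fun τ : ℝ => A (x, ρ x - τ)) (𝓝[>] 0) (𝓝[Ωᶜ] (A (x, ρ x))) := by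
      refine tendsto_nhdsWithin_iff.2 ⟨?_, ?_⟩
      · exact ((hA.comp (by fun_prop)).tendsto' 0 _ (by simp)).mono_left nhdsWithin_le_nhds
      · filter_upwards [Ioo_mem_nhdsGT hε] with τ hτ
        exact hcl (hext _ ⟨hx, by linarith [hτ.2], by linarith [hτ.1]⟩).1
    exact (hu _ hfr).tendsto.comp hcurve
  exact ⟨_, by positivity, convexOn_lowerCollar_graph_add_sq hρ hρc hgap hw
    (hu.comp hA.continuousOn fun p hp => hcl (hext p hp).1) hBV hε hlim⟩

theorem IsLocalCoord.exists_convexOn_graph_add_sq (hΩo : IsOpen Ω) (hΩ : Convex ℝ Ω)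
    (h : IsLocalCoord n Ω ξ f ν δ ρ) (hρ : ContDiffOn ℝ 2 ρ (ball 0 δ)) {u : Euc n → ℝ}
    (hu : ContinuousOn u Ωᶜ) (hlc : LocallyConvexOn' n (closure Ω)ᶜ u) :
    ∃ r > 0, ball (0 : Euc' n) r ⊆ ball 0 δ ∧ ∃ K > 0,
      ConvexOn ℝ (ball 0 r) (fun x => u (ξ + f x + ρ x • ν) + K / 2 * ‖x‖ ^ 2) := by
  have hδ : ball (0 : Euc' n) δ ∈ 𝓝 0 := ball_mem_nhds 0 h.1
  obtain ⟨ε, hε, hgood⟩ := h.eventually_mem_iff (hρ.continuousOn.continuousAt hδ)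
  obtain ⟨L, T, hT, hLip⟩ :=
    ((hρ.contDiffAt hδ).fderiv_right (m := 1) le_rfl).exists_lipschitzOnWith
  obtain ⟨r, hr, hV⟩ := eventually_nhds_iff_ball.1 (hgood.and hT)
  have hVδ : ball (0 : Euc' n) r ⊆ ball 0 δ := fun x hx => mem_ball_zero_iff.2 (hV x hx).1.1
  have hρV : ConvexOn ℝ (ball 0 r) ρ := convexOn_of_mem_iff_lt (convex_ball 0 r)
    (hΩ.affine_preimage (graphChart ξ ν f.toLinearMap)) (fun x hx => (hV x hx).1.2.1)
    fun x hx t ht => ((hV x hx).1.2.2 t (by linarith)).1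
  have hgap : ChordGapLE (ball 0 r) ρ (L + 1 : NNReal) :=
    chordGapLE_of_lipschitzOnWith_fderiv (convex_ball 0 r)
      (fun z hz => ((hρ.contDiffAt (isOpen_ball.mem_nhds (hVδ hz))).differentiableAt
        (by norm_num)).hasFDerivAt)
      ((hLip.mono fun z hz => (hV z hz).2).weaken (le_add_of_nonneg_right zero_le_one))
  have hext := h.graphChart_mem_of_mem_lowerCollar (fun x hx => mem_ball_zero_iff.1 hx)
    fun x hx => (hV x hx).1.2
  exact ⟨r, hr, hVδ, h.exists_convexOn_graph_add_sq_of_lowerCollar hΩo hu hlc hε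
    (by positivity) hVδ hρV (hρ.continuousOn.mono hVδ) hgap hext⟩

end LocalCoordinates

theorem locally_convex_boundary_semiconvex_general
    (n : ℕ) (Ω : Set (Euc n)) (hΩo : IsOpen Ω)
    (hΩcvx : Convex ℝ Ω) (hC3 : CkBoundary n 3 Ω)
    (u φ : Euc n → ℝ) (hu : ContinuousOn u Ωᶜ)
    (hlc : LocallyConvexOn' n (closure Ω)ᶜ u) (hbc : ∀ x ∈ frontier Ω, φ x = u x) :
    SemiconvexBdry n Ω φ := by
  intro ξ hξ
  obtain ⟨f, ν, δ, ρ, h, hρ, -⟩ := hC3 ξ hξ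
  obtain ⟨r, hr, hrδ, K, hK, hconv⟩ :=
    h.exists_convexOn_graph_add_sq hΩo hΩcvx (hρ.of_le (by norm_num)) hu hlc
  have h' := h.mono hr hrδ
  refine ⟨f, ν, r, ρ, h', K, hK, hconv.congr fun x hx => ?_⟩
  rw [hbc _ (h'.2.2.2.2.1 x (mem_ball_zero_iff.1 hx))]

/-- If `Ω ⊆ ℝⁿ` (`n ≥ 3`) is a bounded convex domain with `C³` boundary,
`u ∈ C⁰(ℝⁿ \ Ω)` is locally convex in `ℝⁿ \ Ω̄`, and `φ := u` on `∂Ω`,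
then `φ` is semi-convex with respect to `∂Ω`. -/
theorem locally_convex_boundary_semiconvex
    (n : ℕ) (hn : 3 ≤ n) (Ω : Set (Euc n)) (hΩo : IsOpen Ω) (hΩne : Ω.Nonempty)
    (hΩcvx : Convex ℝ Ω) (hΩb : IsBounded Ω) (hC3 : CkBoundary n 3 Ω)
    (u φ : Euc n → ℝ) (hu : ContinuousOn u Ωᶜ)
    (hlc : LocallyConvexOn' n (closure Ω)ᶜ u) (hbc : ∀ x ∈ frontier Ω, φ x = u x) :
    SemiconvexBdry n Ω φ :=
  locally_convex_boundary_semiconvex_general n Ω hΩo hΩcvx hC3 u φ hu hlc hbc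
end
end

section
/- Let D and D₁ be domains in ℝⁿ with D bounded and D̄ ⊆ D₁. Suppose u ∈ C⁰(D₁) is a viscosity subsolution of det(D²u) = 1 in D₁, v ∈ C⁰(D̄) is a viscosity subsolution of det(D²v) = 1 in D, and v ≤ u on ∂D. Define w = max{u, v} in D̄ and w = u in D₁ \ D. If w is locally convex in D₁, then w is a viscosity subsolution of det(D²w) = 1 in D₁. -/
open Metric Filter MeasureTheory Bornology
open scoped RealInnerProductSpace Topology Classical

noncomputable section

/-- If `u` is a viscosity subsolution of `det D²u = 1` in `D₁`, `v` one in a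
bounded domain `D` with `D̄ ⊆ D₁` and `v ≤ u` on `∂D`, and the function
`w = max{u, v}` in `D̄`, `w = u` in `D₁ \ D` is locally convex in `D₁`, then `w` is a
viscosity subsolution of `det D²w = 1` in `D₁`. -/
theorem max_patch_viscosity_subsolution
    (n : ℕ) (D D₁ : Set (Euc n)) (hD : IsOpen D) (hDconn : IsConnected D)
    (hD₁ : IsOpen D₁) (hD₁conn : IsConnected D₁)
    (hDb : IsBounded D) (hDD₁ : closure D ⊆ D₁)
    (u v : Euc n → ℝ) (hu : ViscSubsol n D₁ u)
    (hvC : ContinuousOn v (closure D)) (hv : ViscSubsol n D v)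
    (hle : ∀ x ∈ frontier D, v x ≤ u x)
    (hwlc : LocallyConvexOn' n D₁ (fun x => if x ∈ closure D then max (u x) (v x) else u x)) :
    ViscSubsol n D₁ (fun x => if x ∈ closure D then max (u x) (v x) else u x) := by
  set w := fun x => if x ∈ closure D then max (u x) (v x) else u x with hwdef
  have hwu : ∀ y, u y ≤ w y := by
    intro y; simp only [hwdef]; split
    · exact le_max_left _ _
    · exact le_rfl
  refine ⟨?_, hwlc, ?_⟩
  · intro x hx
    obtain ⟨r, hr, hball, hconv⟩ := hwlc x hx
    exact ((hconv.continuousOn isOpen_ball x (mem_ball_self hr)).continuousAt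
      (ball_mem_nhds x hr)).continuousWithinAt
  · intro φ hφ x₀ hx₀ hmax
    by_cases hcase : x₀ ∈ closure D ∧ u x₀ < v x₀
    · obtain ⟨hxc, hlt⟩ := hcase
      have hxD : x₀ ∈ D := by
        by_contra h
        have hfr : x₀ ∈ frontier D := ⟨hxc, by rwa [hD.interior_eq]⟩
        exact absurd (hle x₀ hfr) (not_le.2 hlt)
      have hwx₀ : w x₀ = v x₀ := by
        simp only [hwdef, if_pos hxc, max_eq_right hlt.le]
      have hvw : ∀ y ∈ D, v y ≤ w y := by
        intro y hy
        simp only [hwdef, if_pos (subset_closure hy)]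
        exact le_max_right _ _
      apply hv.2.2 φ (hφ.mono (fun y hy => hDD₁ (subset_closure hy))) x₀ hxD
      filter_upwards [hmax, hD.mem_nhds hxD] with y hy hyD
      have h1 : v y - φ y ≤ w y - φ y := by linarith [hvw y hyD]
      have h2 : w y - φ y ≤ w x₀ - φ x₀ := hy

      linarith [hwx₀ ▸ h2]
    · have hwx₀ : w x₀ = u x₀ := by
        push_neg at hcase
        by_cases h : x₀ ∈ closure D
        · simp only [hwdef, if_pos h, max_eq_left (hcase h)]
        · simp only [hwdef, if_neg h]
      apply hu.2.2 φ hφ x₀ hx₀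
      filter_upwards [hmax] with y hy
      have h1 : u y - φ y ≤ w y - φ y := by linarith [hwu y]
      have h2 : w y - φ y ≤ w x₀ - φ x₀ := hy

      linarith [hwx₀ ▸ h2]
end
end
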